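/- Let γ ∈ (0,1) and G ⊆ G_γ with 0 ∈ G, and let ψ be a tame strong solution of DHW_G with ψ(0) = δ. Define ψ̂₀(z) := exp(i·π·U(0)·z/ρ₀) (note that U(0) is real, and ψ̂₀ is the solution of the free-beam equation (ρ₀/π)·ψ̂₀′ = i·U(0)·ψ̂₀ with ψ̂₀(0) = 1), and set N_cpl := π·C_U·(𝔖₀(α_U)−1)/(γ·ρ₀). Then for all z ∈ ℝ: |ψ̂₀(z) − ψ₀(z)| ≤ min{N_cpl·|z|, 2} and (Σ_{g∈G, g≠0} ρ_g·|ψ_g(z)|²)^{1/2} ≤ min{N_cpl·|z|, 1}·√ρ₀. -/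

import Mathlib

noncomputable section

open scoped RealInnerProductSpace BigOperators
open Real

/-- `ℝ^d` with the Euclidean structure. -/
abbrev V (d : ℕ) : Type := EuclideanSpace ℝ (Fin d)

/-- `Λ` is a full-rank lattice: the set of integer linear combinations of some
basis of `ℝ^d`. -/
def IsLattice {d : ℕ} (Λ : Set (V d)) : Prop :=
  ∃ b : Module.Basis (Fin d) ℝ (V d),
    Λ = {x : V d | ∃ c : Fin d → ℤ, x = ∑ i, (c i : ℝ) • b i}

/-- The vector `ν = (0,…,0,1)`. -/
def nu (d : ℕ) (hd : 0 < d) : V d :=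
  EuclideanSpace.single ⟨d - 1, Nat.sub_lt hd Nat.one_pos⟩ (1 : ℝ)

/-- `ρ_g = (k₀+g)·ν`. -/
def rho {d : ℕ} (k₀ ν g : V d) : ℝ := ⟪k₀ + g, ν⟫

/-- `σ_g = |k₀|² - |k₀+g|²`. -/
def sig {d : ℕ} (k₀ g : V d) : ℝ := ‖k₀‖ ^ 2 - ‖k₀ + g‖ ^ 2

/-- `G_γ = {g ∈ Λ : ρ_g ≥ γ·ρ₀}`. -/
def Gset {d : ℕ} (Λ : Set (V d)) (k₀ ν : V d) (γ : ℝ) : Set (V d) :=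
  {g ∈ Λ | γ * ⟪k₀, ν⟫ ≤ rho k₀ ν g}

/-- `G^M = {g ∈ Λ : |g| ≤ M}`. -/
def GMball {d : ℕ} (Λ : Set (V d)) (M : ℝ) : Set (V d) := {g ∈ Λ | ‖g‖ ≤ M}

/-- `𝔖_m(β) = Σ_{κ∈Λ} |κ|^m·exp(-β·|κ|)`. -/
def Sm {d : ℕ} (Λ : Set (V d)) (m : ℕ) (β : ℝ) : ℝ :=
  ∑' κ : Λ, ‖(κ : V d)‖ ^ m * Real.exp (-β * ‖(κ : V d)‖)

/-- The norm `‖φ‖_G` of `ℋ(G)`. -/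
def normOn {d : ℕ} (k₀ ν : V d) (G : Set (V d)) (φ : V d → ℂ) : ℝ :=
  Real.sqrt (∑' g : G, rho k₀ ν (g : V d) * ‖φ (g : V d)‖ ^ 2)

/-- The exponentially weighted norm `‖φ‖_α`. -/
def normA {d : ℕ} (k₀ ν : V d) (G : Set (V d)) (α : ℝ) (φ : V d → ℂ) : ℝ :=
  Real.sqrt (∑' g : G,
    Real.exp (2 * α * ‖(g : V d)‖) * rho k₀ ν (g : V d) * ‖φ (g : V d)‖ ^ 2)

/-- `φ|_G` is a member of `ℋ(G)`, i.e. `‖φ‖_G² < ∞`. -/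
def MemH {d : ℕ} (k₀ ν : V d) (G : Set (V d)) (φ : V d → ℂ) : Prop :=
  Summable fun g : G => rho k₀ ν (g : V d) * ‖φ (g : V d)‖ ^ 2

/-- The DHW equations on the beam set `G`:
`(ρ_g/π)·ψ_g′(z) = i(σ_g ψ_g(z) + Σ_{h∈G} U(g-h) ψ_h(z))` for `g ∈ G`,
including summability of the interaction sum. -/
def SatDHW {d : ℕ} (k₀ ν : V d) (U : V d → ℂ) (G : Set (V d)) (ψ : ℝ → V d → ℂ) : Prop :=
  ∀ z : ℝ, ∀ g ∈ G,
    Summable (fun h : G => U (g - (h : V d)) * ψ z (h : V d)) ∧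
    HasDerivAt (fun w => ψ w g)
      (((π / rho k₀ ν g : ℝ) : ℂ) * (Complex.I *
        (((sig k₀ g : ℝ) : ℂ) * ψ z g +
          ∑' h : G, U (g - (h : V d)) * ψ z (h : V d)))) z

/-- `z ↦ (w(g)·ψ_g(z))_{g∈G}` is a differentiable curve in `ℋ(G)`, encoded by
the weighted embedding `g ↦ w(g)·√ρ_g·ψ_g(z)` into `ℓ²(G)`. -/
def CurveDiff {d : ℕ} (k₀ ν : V d) (G : Set (V d)) (w : V d → ℝ) (ψ : ℝ → V d → ℂ) : Prop :=
  ∃ A : ℝ → lp (fun _ : G => ℂ) 2, Differentiable ℝ A ∧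
    ∀ (z : ℝ) (g : G),
      A z g = ((w (g : V d) * Real.sqrt (rho k₀ ν (g : V d)) : ℝ) : ℂ) * ψ z (g : V d)

/-- Tame strong solution of `DHW_G`. -/
def IsTameSol {d : ℕ} (k₀ ν : V d) (U : V d → ℂ) (G : Set (V d)) (ψ : ℝ → V d → ℂ) : Prop :=
  SatDHW k₀ ν U G ψ ∧ CurveDiff k₀ ν G (fun _ => 1) ψ ∧
  ∀ z : ℝ,
    Summable (fun g : G => |sig k₀ (g : V d)| * ‖ψ z (g : V d)‖ ^ 2) ∧
    Summable (fun q : G × G =>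
      ‖U ((q.1 : V d) - (q.2 : V d))‖ * ‖ψ z (q.2 : V d)‖ * ‖ψ z (q.1 : V d)‖)

/-- `α`-tame strong solution of `DHW_G`. -/
def IsAlphaTameSol {d : ℕ} (k₀ ν : V d) (U : V d → ℂ) (G : Set (V d)) (α : ℝ)
    (ψ : ℝ → V d → ℂ) : Prop :=
  SatDHW k₀ ν U G ψ ∧ CurveDiff k₀ ν G (fun _ => 1) ψ ∧
  CurveDiff k₀ ν G (fun g => Real.exp (α * ‖g‖)) ψ ∧
  ∀ z : ℝ,
    Summable (fun g : G =>
      Real.exp (2 * α * ‖(g : V d)‖) * |sig k₀ (g : V d)| * ‖ψ z (g : V d)‖ ^ 2) ∧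
    Summable (fun q : G × G =>
      Real.exp (α * ‖(q.1 : V d)‖ + α * ‖(q.2 : V d)‖) *
        ‖U ((q.1 : V d) - (q.2 : V d))‖ * ‖ψ z (q.2 : V d)‖ * ‖ψ z (q.1 : V d)‖)

open Classical in
/-- Initial condition `ψ(0) = δ` on `G`. -/
def InitDelta {d : ℕ} (G : Set (V d)) (ψ : ℝ → V d → ℂ) : Prop :=
  ∀ g ∈ G, ψ 0 g = if g = (0 : V d) then 1 else 0

/-!
Tame solutions conserve the beam energy `∑ ρ_g |ψ_g|²`: the coupling enters its derivative only
through the hermitian form `∑ conj ψ_g U(g-h) ψ_h`, which is real. Starting from `δ` the energy is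
`ρ₀`, so the scattered energy is `ρ₀ (1 - |ψ₀|²)` and each scattered beam obeys
`|ψ_g| ≤ √((1 - |ψ₀|²) / γ)`. Hence `ψ₀` solves the free-beam equation up to the forcing
`(π/ρ₀) i ∑_{h ≠ 0} U(-h) ψ_h`, of size at most `M √(1 - |ψ₀|²)` with
`M = π C_U (𝔖₀ - 1) / (ρ₀ √γ) ≤ N_cpl`. Integrating the forcing against the free phase gives the
first bound; since the free rotation does not change `|ψ₀|`, `√(1 - |ψ₀|²)` grows at rate at most
`M`, which gives the second.
-/

open Complex ComplexConjugate

theorem Summable.subtype_of_subset {α β : Type*} [NormedAddCommGroup α] [CompleteSpace α]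
    {f : β → α} {s t : Set β} (hst : s ⊆ t) (hf : Summable fun x : t => f x) :
    Summable fun x : s => f x :=
  hf.comp_injective (Set.inclusion_injective hst)

theorem Summable.tsum_subtype_eq_add_tsum_sdiff_singleton {α β : Type*} [NormedAddCommGroup α]
    [CompleteSpace α] {f : β → α} {s : Set β} {a : β} (ha : a ∈ s)
    (hf : Summable fun x : s => f x) : ∑' x : s, f x = f a + ∑' x : ↥(s \ {a}), f x := by
  conv_lhs => rw [← Set.union_sdiff_cancel (Set.singleton_subset_iff.2 ha)]
  rw [Summable.tsum_union_disjoint Set.disjoint_sdiff_right ((Set.finite_singleton a).summable f)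
    (hf.subtype_of_subset Set.sdiff_subset),
    tsum_singleton]

theorem im_tsum_conj_mul_tsum_eq_zero {ι : Type*} {K : ι → ι → ℂ}
    (hK : ∀ i j, conj (K i j) = K j i) {x : ι → ℂ}
    (hsum : Summable fun q : ι × ι => ‖K q.1 q.2‖ * ‖x q.2‖ * ‖x q.1‖) :
    ∑' i, (conj (x i) * ∑' j, K i j * x j).im = 0 := by
  set W : ι × ι → ℂ := fun q => conj (x q.1) * (K q.1 q.2 * x q.2)
  have hW : Summable W := .of_norm <| hsum.congr fun q => by
    simp only [W, norm_mul, RCLike.norm_conj]; ring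
  have hfib : HasSum (fun i => conj (x i) * ∑' j, K i j * x j) (∑' q, W q) :=
    hW.hasSum.prod_fiberwise fun i => by rw [← tsum_mul_left]; exact (hW.prod_factor i).hasSum
  -- swapping the two indices conjugates every term, so the total is real
  have hreal : conj (∑' q, W q) = ∑' q, W q := by
    rw [conj_tsum, ← (Equiv.prodComm ι ι).tsum_eq]
    congr 1; ext q
    simp only [W, map_mul, conj_conj, hK, Equiv.prodComm_apply, Prod.fst_swap, Prod.snd_swap]
    ring
  rw [(hasSum_im hfib).tsum_eq]
  exact conj_eq_iff_im.mp hreal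

theorem real_inner_sqrt_mul_mul_I {ρ : ℝ} (hρ : 0 < ρ) (σ : ℝ) (a t : ℂ) :
    inner ℝ ((√ρ : ℂ) * a) ((√ρ : ℂ) * (((π / ρ : ℝ) : ℂ) * (I * ((σ : ℂ) * a + t)))) =
      -π * (conj a * t).im := by
  have hπ : (√ρ : ℂ) * √ρ * ((π / ρ : ℝ) : ℂ) = π := by
    rw [← ofReal_mul, ← ofReal_mul, Real.mul_self_sqrt hρ.le, mul_div_cancel₀ _ hρ.ne']
  have : conj ((√ρ : ℂ) * a) * ((√ρ : ℂ) * (((π / ρ : ℝ) : ℂ) * (I * ((σ : ℂ) * a + t)))) =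
      I * π * ((σ * Complex.normSq a : ℝ) + conj a * t) := by
    rw [map_mul, conj_ofReal, ofReal_mul, normSq_eq_conj_mul_self]
    linear_combination (I * (σ * (conj a * a) + conj a * t)) * hπ
  rw [Complex.inner, mul_comm, this]
  simp [mul_re, mul_im]

theorem div_mul_sqrt_le_div_mul {c ρ γ : ℝ} (hc : 0 ≤ c) (hρ : 0 < ρ) (hγ : 0 < γ)
    (hγ1 : γ ≤ 1) : c / (ρ * √γ) ≤ c / (γ * ρ) := by
  refine div_le_div_of_nonneg_left hc (by positivity) ?_
  rw [mul_comm γ]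
  exact mul_le_mul_of_nonneg_left (Real.le_sqrt_self_iff.2 hγ1) hρ.le

theorem norm_sub_le_mul_abs_of_norm_deriv_le {E : Type*} [NormedAddCommGroup E]
    [NormedSpace ℝ E] {f f' : ℝ → E} {C : ℝ} (hf : ∀ t, HasDerivAt f (f' t) t)
    (hC : ∀ t, ‖f' t‖ ≤ C) (z : ℝ) : ‖f z - f 0‖ ≤ C * |z| := by
  simpa [Real.norm_eq_abs] using convex_univ.norm_image_sub_le_of_norm_hasDerivWithin_le
    (fun t _ => (hf t).hasDerivWithinAt) (fun t _ => hC t) (Set.mem_univ 0) (Set.mem_univ z)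

theorem sqrt_le_mul_abs_of_abs_deriv_le {Q Q' : ℝ → ℝ} {K : ℝ} (hK : 0 ≤ K)
    (hQ : ∀ t, HasDerivAt Q (Q' t) t) (hQ_nonneg : ∀ t, 0 ≤ Q t) (hQ0 : Q 0 = 0)
    (hQ' : ∀ t, |Q' t| ≤ 2 * K * √(Q t)) (z : ℝ) : √(Q z) ≤ K * |z| := by
  -- `√Q` need not be differentiable where `Q` vanishes, so compare with `√(Q + ε²)` instead
  refine le_of_forall_pos_le_add fun ε hε => ?_
  have hpos : ∀ t, 0 < Q t + ε ^ 2 := fun t => by have := hQ_nonneg t; positivity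
  have hderiv : ∀ t, ‖Q' t / (2 * √(Q t + ε ^ 2))‖ ≤ K := fun t => by
    have hs : 0 < 2 * √(Q t + ε ^ 2) := by have := Real.sqrt_pos.2 (hpos t); positivity
    rw [Real.norm_eq_abs, abs_div, abs_of_pos hs, div_le_iff₀ hs]
    calc |Q' t| ≤ 2 * K * √(Q t) := hQ' t
      _ ≤ 2 * K * √(Q t + ε ^ 2) := by gcongr; linarith [sq_nonneg ε]
      _ = K * (2 * √(Q t + ε ^ 2)) := by ring
  have h := norm_sub_le_mul_abs_of_norm_deriv_le
    (fun t => ((hQ t).add_const (ε ^ 2)).sqrt (hpos t).ne') hderiv z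
  rw [hQ0, zero_add, Real.sqrt_sq hε.le, Real.norm_eq_abs] at h
  have : √(Q z) ≤ √(Q z + ε ^ 2) := Real.sqrt_le_sqrt (by linarith [sq_nonneg ε])
  linarith [le_abs_self (√(Q z + ε ^ 2) - ε)]

theorem norm_cexp_sub_le_of_hasDerivAt {a M : ℝ} {f F : ℝ → ℂ}
    (hf : ∀ t, HasDerivAt f (I * a * f t + F t) t) (hF : ∀ t, ‖F t‖ ≤ M) (hf0 : f 0 = 1)
    (z : ℝ) : ‖cexp (I * ↑(a * z)) - f z‖ ≤ M * |z| := by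
  have hζ : ∀ t : ℝ, HasDerivAt (fun s : ℝ => cexp (I * ↑(-a * s)) * f s)
      (cexp (I * ↑(-a * t)) * F t) t := fun t => by
    have he : HasDerivAt (fun s : ℝ => cexp (I * ↑(-a * s)))
        (cexp (I * ↑(-a * t)) * (I * ↑(-a))) t := by
      simpa using (((hasDerivAt_id t).const_mul (-a)).ofReal_comp.const_mul I).cexp
    exact (he.mul (hf t)).congr_deriv (by push_cast; ring)
  have h := norm_sub_le_mul_abs_of_norm_deriv_le hζ (fun t => by
    rw [norm_mul, norm_exp_I_mul_ofReal, one_mul]; exact hF t) z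
  have hinv : cexp (I * ↑(a * z)) * cexp (I * ↑(-a * z)) = 1 := by
    rw [← Complex.exp_add, ← mul_add, ← ofReal_add, neg_mul, add_neg_cancel, ofReal_zero,
      mul_zero, Complex.exp_zero]
  calc ‖cexp (I * ↑(a * z)) - f z‖ = ‖cexp (I * ↑(a * z)) * (cexp (I * ↑(-a * z)) * f z - 1)‖ := by
        rw [mul_sub, ← mul_assoc, hinv, one_mul, mul_one, ← norm_neg, neg_sub]
    _ ≤ M * |z| := by
        rw [norm_mul, norm_exp_I_mul_ofReal, one_mul]
        rwa [mul_zero, ofReal_zero, mul_zero, Complex.exp_zero, one_mul, hf0] at h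

theorem sqrt_one_sub_norm_sq_le_of_hasDerivAt {a M : ℝ} {f F : ℝ → ℂ}
    (hf : ∀ t, HasDerivAt f (I * a * f t + F t) t) (hM : 0 ≤ M) (hf1 : ∀ t, ‖f t‖ ≤ 1)
    (hF : ∀ t, ‖F t‖ ≤ M * √(1 - ‖f t‖ ^ 2)) (hf0 : f 0 = 1) (z : ℝ) :
    √(1 - ‖f z‖ ^ 2) ≤ M * |z| := by
  have hQ : ∀ t, HasDerivAt (fun s => 1 - ‖f s‖ ^ 2) (-(2 * inner ℝ (f t) (F t))) t := fun t => by
    have horth : inner ℝ (f t) (I * a * f t) = 0 := by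
      rw [Complex.inner, mul_assoc, mul_assoc, mul_conj, ← ofReal_mul, I_mul_re, ofReal_im,
        neg_zero]
    refine (((hf t).norm_sq).const_sub 1).congr_deriv ?_
    rw [inner_add_right, horth, zero_add]
  refine sqrt_le_mul_abs_of_abs_deriv_le hM hQ (fun t => ?_) (by simp [hf0]) (fun t => ?_) z
  · nlinarith [hf1 t, norm_nonneg (f t)]
  · rw [abs_neg, abs_mul, abs_two, mul_assoc]
    gcongr
    calc |inner ℝ (f t) (F t)| ≤ ‖f t‖ * ‖F t‖ := abs_real_inner_le_norm _ _
      _ ≤ 1 * (M * √(1 - ‖f t‖ ^ 2)) := by gcongr; exacts [hf1 t, hF t]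
      _ = _ := one_mul _

theorem free_beam_bounds {a M N : ℝ} {f F : ℝ → ℂ}
    (hf : ∀ t, HasDerivAt f (I * a * f t + F t) t) (hM : 0 ≤ M) (hMN : M ≤ N)
    (hf1 : ∀ t, ‖f t‖ ≤ 1) (hF : ∀ t, ‖F t‖ ≤ M * √(1 - ‖f t‖ ^ 2)) (hf0 : f 0 = 1) (z : ℝ) :
    ‖cexp (I * ↑(a * z)) - f z‖ ≤ min (N * |z|) 2 ∧ √(1 - ‖f z‖ ^ 2) ≤ min (N * |z|) 1 := by
  have hsqrt : ∀ t, √(1 - ‖f t‖ ^ 2) ≤ 1 := fun t =>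
    Real.sqrt_le_one.2 (by linarith [sq_nonneg ‖f t‖])
  refine ⟨le_min ?_ ?_, le_min ?_ (hsqrt z)⟩
  · exact (norm_cexp_sub_le_of_hasDerivAt hf
      (fun t => (hF t).trans (mul_le_of_le_one_right hM (hsqrt t))) hf0 z).trans (by gcongr)
  · calc ‖cexp (I * ↑(a * z)) - f z‖ ≤ ‖cexp (I * ↑(a * z))‖ + ‖f z‖ := norm_sub_le _ _
      _ ≤ 2 := by rw [norm_exp_I_mul_ofReal]; linarith [hf1 z]
  · exact (sqrt_one_sub_norm_sq_le_of_hasDerivAt hf hM hf1 hF hf0 z).trans (by gcongr)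

section Lattice

variable {d : ℕ} {Λ : Set (V d)}

theorem IsLattice.exists_eq_span (hΛ : IsLattice Λ) :
    ∃ b : Module.Basis (Fin d) ℝ (V d), Λ = Submodule.span ℤ (Set.range b) := by
  obtain ⟨b, rfl⟩ := hΛ
  refine ⟨b, ?_⟩
  ext x
  simp [Submodule.mem_span_range_iff_exists_fun, eq_comm, Int.cast_smul_eq_zsmul]

theorem IsLattice.zero_mem (hΛ : IsLattice Λ) : (0 : V d) ∈ Λ := by
  obtain ⟨b, rfl⟩ := hΛ.exists_eq_span
  exact Submodule.zero_mem _

theorem IsLattice.sub_mem (hΛ : IsLattice Λ) {x y : V d} (hx : x ∈ Λ) (hy : y ∈ Λ) :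
    x - y ∈ Λ := by
  obtain ⟨b, rfl⟩ := hΛ.exists_eq_span
  exact Submodule.sub_mem _ hx hy

theorem IsLattice.neg_mem (hΛ : IsLattice Λ) {x : V d} (hx : x ∈ Λ) : -x ∈ Λ := by
  simpa using hΛ.sub_mem hΛ.zero_mem hx

theorem IsLattice.summable_exp_neg_mul_norm (hΛ : IsLattice Λ) {β : ℝ} (hβ : 0 < β) :
    Summable fun κ : Λ => Real.exp (-β * ‖(κ : V d)‖) := by
  obtain ⟨b, rfl⟩ := hΛ.exists_eq_span
  have hrank : Module.finrank ℤ (Submodule.span ℤ (Set.range b)) < d + 1 := by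
    rw [ZLattice.rank ℝ]; simp
  -- `exp (β r) ≥ (β r)ⁿ / n!` turns exponential decay into the `p`-series bound on lattices
  refine .of_norm_bounded_eventually
    ((ZLattice.summable_norm_pow_inv _ _ hrank).mul_left ((d + 1).factorial / β ^ (d + 1))) ?_
  filter_upwards [Filter.eventually_cofinite_ne 0] with κ hκ
  have hκ : 0 < ‖κ‖ := norm_pos_iff.2 hκ
  have := Real.pow_div_factorial_le_exp (β * ‖κ‖) (by positivity) (d + 1)
  rw [Real.norm_of_nonneg (Real.exp_nonneg _), neg_mul, Real.exp_neg, inv_pow, ← div_eq_mul_inv,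
    div_div, ← mul_pow, inv_le_comm₀ (Real.exp_pos _) (by positivity), inv_div]
  exact this

theorem IsLattice.tsum_sdiff_zero_eq (hΛ : IsLattice Λ) {β : ℝ} (hβ : 0 < β) :
    ∑' κ : ↥(Λ \ {0}), Real.exp (-β * ‖(κ : V d)‖) = Sm Λ 0 β - 1 := by
  simp only [Sm, pow_zero, one_mul]
  rw [Summable.tsum_subtype_eq_add_tsum_sdiff_singleton (f := fun κ => Real.exp (-β * ‖κ‖))
    hΛ.zero_mem (hΛ.summable_exp_neg_mul_norm hβ)]
  simp

theorem norm_tsum_mul_le_of_exp_decay {S : Set (V d)} (hΛ : IsLattice Λ)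
    {U φ : V d → ℂ} {C α B : ℝ} (hC : 0 ≤ C) (hα : 0 < α)
    (hU : ∀ g ∈ Λ, ‖U g‖ ≤ C * Real.exp (-α * ‖g‖)) (hS : S ⊆ Λ \ {0}) (hB : 0 ≤ B)
    (hφ : ∀ g ∈ S, ‖φ g‖ ≤ B) : ‖∑' h : S, U (-h) * φ h‖ ≤ C * (Sm Λ 0 α - 1) * B := by
  have hΛ₀ : Summable fun κ : ↥(Λ \ {0}) => Real.exp (-α * ‖(κ : V d)‖) :=
    (hΛ.summable_exp_neg_mul_norm hα).subtype_of_subset (f := fun κ => Real.exp (-α * ‖κ‖))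
      Set.sdiff_subset
  have hS₀ : Summable fun h : S => Real.exp (-α * ‖(h : V d)‖) :=
    hΛ₀.subtype_of_subset (f := fun κ => Real.exp (-α * ‖κ‖)) hS
  calc ‖∑' h : S, U (-h) * φ h‖ ≤ ∑' h : S, C * B * Real.exp (-α * ‖(h : V d)‖) := by
        refine tsum_of_norm_bounded (hS₀.mul_left _).hasSum fun h => ?_
        have hU' := hU _ (hΛ.neg_mem (hS h.2).1)
        rw [norm_neg] at hU'
        rw [norm_mul, mul_right_comm]
        exact mul_le_mul hU' (hφ h h.2) (norm_nonneg _) (by positivity)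
    _ = C * B * ∑' h : S, Real.exp (-α * ‖(h : V d)‖) := tsum_mul_left
    _ ≤ C * B * ∑' κ : ↥(Λ \ {0}), Real.exp (-α * ‖(κ : V d)‖) := by
        gcongr
        exact hS₀.tsum_le_tsum_of_inj _ (Set.inclusion_injective hS)
          (fun _ _ => Real.exp_nonneg _) (fun _ => le_rfl) hΛ₀
    _ = C * (Sm Λ 0 α - 1) * B := by rw [hΛ.tsum_sdiff_zero_eq hα]; ring

end Lattice

section Beams

variable {d : ℕ} {k₀ ν : V d} {U : V d → ℂ} {G : Set (V d)} {ψ : ℝ → V d → ℂ} {φ : V d → ℂ}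
  {γ : ℝ}

theorem hasSum_rho_mul_norm_sq_of_apply_eq {A : lp (fun _ : G => ℂ) 2}
    (hρ : ∀ g ∈ G, 0 ≤ rho k₀ ν g) (hA : ∀ g : G, A g = (√(rho k₀ ν g) : ℂ) * φ g) :
    HasSum (fun g : G => rho k₀ ν g * ‖φ g‖ ^ 2) (‖A‖ ^ 2) := by
  have h := lp.hasSum_norm (p := 2) (by norm_num) A
  simp only [ENNReal.toReal_ofNat, Real.rpow_two, hA, norm_mul, Complex.norm_real,
    Real.norm_of_nonneg (Real.sqrt_nonneg _), mul_pow] at h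
  convert h using 2 with g
  rw [Real.sq_sqrt (hρ g g.2)]

theorem normOn_eq_norm_of_apply_eq {A : lp (fun _ : G => ℂ) 2}
    (hρ : ∀ g ∈ G, 0 ≤ rho k₀ ν g) (hA : ∀ g : G, A g = (√(rho k₀ ν g) : ℂ) * φ g) :
    normOn k₀ ν G φ = ‖A‖ := by
  rw [normOn, (hasSum_rho_mul_norm_sq_of_apply_eq hρ hA).tsum_eq, Real.sqrt_sq (norm_nonneg _)]

theorem CurveDiff.hasSum_rho_mul_norm_sq (hρ : ∀ g ∈ G, 0 ≤ rho k₀ ν g)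
    (hψ : CurveDiff k₀ ν G (fun _ => 1) ψ) (z : ℝ) :
    HasSum (fun g : G => rho k₀ ν g * ‖ψ z g‖ ^ 2) (normOn k₀ ν G (ψ z) ^ 2) := by
  obtain ⟨A, -, hA⟩ := hψ
  simp only [one_mul] at hA
  rw [normOn_eq_norm_of_apply_eq hρ (hA z)]
  exact hasSum_rho_mul_norm_sq_of_apply_eq hρ (hA z)

theorem IsTameSol.normOn_eq (hρ : ∀ g ∈ G, 0 < rho k₀ ν g)
    (hU : ∀ g ∈ G, ∀ h ∈ G, conj (U (g - h)) = U (h - g)) (hψ : IsTameSol k₀ ν U G ψ)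
    (z : ℝ) : normOn k₀ ν G (ψ z) = normOn k₀ ν G (ψ 0) := by
  obtain ⟨hDHW, ⟨A, hA_diff, hA⟩, htame⟩ := hψ
  simp only [one_mul] at hA
  have hnorm : ∀ z, normOn k₀ ν G (ψ z) = ‖A z‖ := fun z =>
    normOn_eq_norm_of_apply_eq (fun g hg => (hρ g hg).le) (hA z)
  have hA' : ∀ z (g : G), deriv A z g = (√(rho k₀ ν g) : ℂ) *
      (((π / rho k₀ ν g : ℝ) : ℂ) * (I * (((sig k₀ g : ℝ) : ℂ) * ψ z g +
        ∑' h : G, U (g - h) * ψ z h))) := fun z g => by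
    have h₁ : HasDerivAt (fun t => A t g) (deriv A z g) z :=
      ((lp.evalCLM ℂ (fun _ : G => ℂ) 2 g).restrictScalars ℝ).hasFDerivAt.comp_hasDerivAt z
        (hA_diff z).hasDerivAt
    have h₂ := ((hDHW z g g.2).2).const_mul (√(rho k₀ ν g) : ℂ)
    simp only [← hA] at h₂
    exact h₁.unique h₂
  have horth : ∀ z, inner ℝ (A z) (deriv A z) = 0 := fun z => by
    rw [lp.inner_eq_tsum]
    simp only [hA, hA', real_inner_sqrt_mul_mul_I (hρ _ (Subtype.prop _))]
    rw [tsum_mul_left, im_tsum_conj_mul_tsum_eq_zero (K := fun g h : G => U (g - h))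
      (x := fun g : G => ψ z g) (fun g h => hU g g.2 h h.2) (htame z).2, mul_zero]
  have hconst : ∀ z, ‖A z‖ ^ 2 = ‖A 0‖ ^ 2 := fun z =>
    is_const_of_deriv_eq_zero (f := fun t => ‖A t‖ ^ 2)
      (fun t => (hA_diff t).hasDerivAt.norm_sq.differentiableAt)
      (fun t => by rw [(hA_diff t).hasDerivAt.norm_sq.deriv, horth, mul_zero]) z 0
  rw [hnorm, hnorm]
  exact (pow_left_inj₀ (norm_nonneg _) (norm_nonneg _) two_ne_zero).1 (hconst z)

theorem IsTameSol.hasSum_rho_mul_norm_sq (hρ : ∀ g ∈ G, 0 < rho k₀ ν g)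
    (hU : ∀ g ∈ G, ∀ h ∈ G, conj (U (g - h)) = U (h - g)) (h0 : (0 : V d) ∈ G)
    (hψ : IsTameSol k₀ ν U G ψ) (hinit : InitDelta G ψ) (z : ℝ) :
    HasSum (fun g : G => rho k₀ ν g * ‖ψ z g‖ ^ 2) (rho k₀ ν 0) := by
  have h := hψ.2.1.hasSum_rho_mul_norm_sq fun g hg => (hρ g hg).le
  have hδ : HasSum (fun g : G => rho k₀ ν g * ‖ψ 0 g‖ ^ 2) (rho k₀ ν 0) := by
    convert hasSum_single (⟨0, h0⟩ : G) fun g hg => ?_ using 1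
    · simp [hinit 0 h0]
    · rw [hinit g g.2, if_neg fun h => hg (Subtype.ext h)]
      simp
  rw [← (h 0).unique hδ, ← hψ.normOn_eq hρ hU z]
  exact h z

theorem tsum_sdiff_zero_rho_mul_norm_sq (h0 : (0 : V d) ∈ G)
    (hφ : HasSum (fun g : G => rho k₀ ν g * ‖φ g‖ ^ 2) (rho k₀ ν 0)) :
    ∑' g : ↥(G \ {0}), rho k₀ ν g * ‖φ g‖ ^ 2 = rho k₀ ν 0 * (1 - ‖φ 0‖ ^ 2) := by
  have h := hφ.tsum_eq
  rw [Summable.tsum_subtype_eq_add_tsum_sdiff_singleton (f := fun g => rho k₀ ν g * ‖φ g‖ ^ 2)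
    h0 hφ.summable] at h
  linear_combination h

theorem norm_apply_zero_le_one (hρ : ∀ g ∈ G, 0 < rho k₀ ν g) (h0 : (0 : V d) ∈ G)
    (hφ : HasSum (fun g : G => rho k₀ ν g * ‖φ g‖ ^ 2) (rho k₀ ν 0)) : ‖φ 0‖ ≤ 1 := by
  have h := tsum_sdiff_zero_rho_mul_norm_sq h0 hφ
  have : 0 ≤ rho k₀ ν 0 * (1 - ‖φ 0‖ ^ 2) :=
    h ▸ tsum_nonneg fun g => mul_nonneg (hρ g g.2.1).le (sq_nonneg _)
  have := nonneg_of_mul_nonneg_right this (hρ 0 h0)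
  nlinarith [norm_nonneg (φ 0)]

theorem normOn_sdiff_zero_eq (hρ : ∀ g ∈ G, 0 < rho k₀ ν g) (h0 : (0 : V d) ∈ G)
    (hφ : HasSum (fun g : G => rho k₀ ν g * ‖φ g‖ ^ 2) (rho k₀ ν 0)) :
    normOn k₀ ν (G \ {0}) φ = √(rho k₀ ν 0) * √(1 - ‖φ 0‖ ^ 2) := by
  rw [normOn, tsum_sdiff_zero_rho_mul_norm_sq h0 hφ, Real.sqrt_mul (hρ 0 h0).le]

theorem norm_apply_le_of_mem_sdiff_zero (hγ : 0 < γ) (hρ : ∀ g ∈ G, γ * rho k₀ ν 0 ≤ rho k₀ ν g)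
    (hρ0 : 0 < rho k₀ ν 0) (h0 : (0 : V d) ∈ G)
    (hφ : HasSum (fun g : G => rho k₀ ν g * ‖φ g‖ ^ 2) (rho k₀ ν 0)) {g : V d}
    (hg : g ∈ G \ {0}) : ‖φ g‖ ≤ √(1 - ‖φ 0‖ ^ 2) / √γ := by
  have hρ' : ∀ g ∈ G, 0 < rho k₀ ν g := fun g hg => (mul_pos hγ hρ0).trans_le (hρ g hg)
  have hle : rho k₀ ν g * ‖φ g‖ ^ 2 ≤ rho k₀ ν 0 * (1 - ‖φ 0‖ ^ 2) := by
    rw [← tsum_sdiff_zero_rho_mul_norm_sq h0 hφ]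
    refine (hφ.summable.subtype_of_subset (f := fun g => rho k₀ ν g * ‖φ g‖ ^ 2)
      Set.sdiff_subset).le_tsum ⟨g, hg⟩ fun j _ => ?_
    exact mul_nonneg (hρ' j j.2.1).le (sq_nonneg _)
  rw [← Real.sqrt_div' _ hγ.le, ← abs_norm]
  refine Real.abs_le_sqrt ((le_div_iff₀ hγ).2 ?_)
  refine le_of_mul_le_mul_left ?_ hρ0
  calc rho k₀ ν 0 * (‖φ g‖ ^ 2 * γ) = γ * rho k₀ ν 0 * ‖φ g‖ ^ 2 := by ring
    _ ≤ rho k₀ ν g * ‖φ g‖ ^ 2 := by gcongr; exact hρ g hg.1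
    _ ≤ _ := hle

theorem SatDHW.hasDerivAt_apply_zero (hU0 : ((U 0).re : ℂ) = U 0) (h0 : (0 : V d) ∈ G)
    (hψ : SatDHW k₀ ν U G ψ) (t : ℝ) :
    HasDerivAt (fun s => ψ s 0)
      (I * ↑(π * (U 0).re / rho k₀ ν 0) * ψ t 0 +
        ((π / rho k₀ ν 0 : ℝ) : ℂ) * (I * ∑' h : ↥(G \ {0}), U (-h) * ψ t h)) t := by
  obtain ⟨hsum, hderiv⟩ := hψ t 0 h0
  have hsig : sig k₀ 0 = 0 := by simp [sig]
  rw [hsig, Summable.tsum_subtype_eq_add_tsum_sdiff_singleton (f := fun h => U (0 - h) * ψ t h)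
    h0 hsum] at hderiv
  refine hderiv.congr_deriv ?_
  simp only [sub_self, zero_sub, ofReal_zero, ofReal_div, ofReal_mul, hU0]
  ring

theorem norm_coupling_le {Λ : Set (V d)} (hΛ : IsLattice Λ) {CU αU : ℝ} (hCU : 0 ≤ CU)
    (hαU : 0 < αU) (hUbd : ∀ g ∈ Λ, ‖U g‖ ≤ CU * Real.exp (-αU * ‖g‖)) (hγ : 0 < γ)
    (hGΛ : G ⊆ Λ) (hρ : ∀ g ∈ G, γ * rho k₀ ν 0 ≤ rho k₀ ν g) (hρ0 : 0 < rho k₀ ν 0)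
    (h0 : (0 : V d) ∈ G) (hφ : HasSum (fun g : G => rho k₀ ν g * ‖φ g‖ ^ 2) (rho k₀ ν 0)) :
    ‖((π / rho k₀ ν 0 : ℝ) : ℂ) * (I * ∑' h : ↥(G \ {0}), U (-h) * φ h)‖ ≤
      π * CU * (Sm Λ 0 αU - 1) / (rho k₀ ν 0 * √γ) * √(1 - ‖φ 0‖ ^ 2) := by
  have hT := norm_tsum_mul_le_of_exp_decay hΛ hCU hαU hUbd (Set.sdiff_subset_sdiff_left hGΛ)
    (by positivity) fun g hg => norm_apply_le_of_mem_sdiff_zero hγ hρ hρ0 h0 hφ hg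
  rw [norm_mul, norm_mul, norm_I, one_mul, norm_real, Real.norm_of_nonneg (by positivity)]
  calc π / rho k₀ ν 0 * ‖∑' h : ↥(G \ {0}), U (-h) * φ h‖
      ≤ π / rho k₀ ν 0 * (CU * (Sm Λ 0 αU - 1) * (√(1 - ‖φ 0‖ ^ 2) / √γ)) := by gcongr
    _ = _ := by field_simp

end Beams

/-- Lemma 4.1, free-beam approximation:
for a tame strong solution `ψ` of `DHW_G` with `ψ(0) = δ`, the free beam
`ψ̂₀(z) = exp(iπU₀z/ρ₀)` satisfies `|ψ̂₀(z) - ψ₀(z)| ≤ min{N_cpl|z|, 2}` and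
`‖ψ(z)|_{G∖{0}}‖ ≤ min{N_cpl|z|, 1}·√ρ₀`, with
`N_cpl = π·C_U·(𝔖₀(α_U)-1)/(γ·ρ₀)`. -/
theorem stmt10 {d : ℕ} (hd : 0 < d) (Λ : Set (V d)) (hΛ : IsLattice Λ)
    (k₀ : V d) (hk : 0 < ⟪k₀, nu d hd⟫)
    (U : V d → ℂ) (hUsym : ∀ g ∈ Λ, U (-g) = starRingEnd ℂ (U g))
    (CU αU : ℝ) (hCU : 0 < CU) (hαU : 0 < αU)
    (hUbd : ∀ g ∈ Λ, ‖U g‖ ≤ CU * Real.exp (-αU * ‖g‖))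
    (γ : ℝ) (hγ : γ ∈ Set.Ioo (0 : ℝ) 1)
    (G : Set (V d)) (hG : G ⊆ Gset Λ k₀ (nu d hd) γ) (h0 : (0 : V d) ∈ G)
    (ψ : ℝ → V d → ℂ) (hψ : IsTameSol k₀ (nu d hd) U G ψ) (hinit : InitDelta G ψ) :
    ∀ z : ℝ,
      ‖Complex.exp (Complex.I * (π : ℂ) * U 0 * (z : ℂ) / (⟪k₀, nu d hd⟫ : ℝ)) - ψ z 0‖ ≤
        min (π * CU * (Sm Λ 0 αU - 1) / (γ * ⟪k₀, nu d hd⟫) * |z|) 2 ∧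
      normOn k₀ (nu d hd) (G \ {0}) (ψ z) ≤
        min (π * CU * (Sm Λ 0 αU - 1) / (γ * ⟪k₀, nu d hd⟫) * |z|) 1 *
          Real.sqrt ⟪k₀, nu d hd⟫ := by
  intro z
  obtain ⟨hγ0, hγ1⟩ := hγ
  have hρ0 : rho k₀ (nu d hd) 0 = ⟪k₀, nu d hd⟫ := by simp [rho]
  rw [← hρ0] at hk ⊢
  have hρ : ∀ g ∈ G, γ * rho k₀ (nu d hd) 0 ≤ rho k₀ (nu d hd) g := fun g hg => hρ0 ▸ (hG hg).2
  have hρpos : ∀ g ∈ G, 0 < rho k₀ (nu d hd) g := fun g hg => (mul_pos hγ0 hk).trans_le (hρ g hg)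
  have hU : ∀ g ∈ G, ∀ h ∈ G, conj (U (g - h)) = U (h - g) := fun g hg h hh => by
    rw [← hUsym _ (hΛ.sub_mem (hG hg).1 (hG hh).1), neg_sub]
  have hU0 : ((U 0).re : ℂ) = U 0 := conj_eq_iff_re.1 (by simpa using (hUsym 0 hΛ.zero_mem).symm)
  have hE := hψ.hasSum_rho_mul_norm_sq hρpos hU h0 hinit
  have hS : 0 ≤ Sm Λ 0 αU - 1 := hΛ.tsum_sdiff_zero_eq hαU ▸ tsum_nonneg fun _ => Real.exp_nonneg _
  obtain ⟨hψ₀, htail⟩ := free_beam_bounds (hψ.1.hasDerivAt_apply_zero hU0 h0) (by positivity)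
    (div_mul_sqrt_le_div_mul (by positivity) hk hγ0 hγ1.le)
    (fun t => norm_apply_zero_le_one hρpos h0 (hE t))
    (fun t => norm_coupling_le hΛ hCU.le hαU hUbd hγ0 (fun g hg => (hG hg).1) hρ hk h0 (hE t))
    (by simp [hinit 0 h0]) z
  have harg : I * π * U 0 * z / (rho k₀ (nu d hd) 0 : ℝ) =
      I * ↑(π * (U 0).re / rho k₀ (nu d hd) 0 * z) := by push_cast [hU0]; ring
  refine ⟨harg ▸ hψ₀, ?_⟩
  rw [normOn_sdiff_zero_eq hρpos h0 (hE z), mul_comm]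
  gcongr
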